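/- For a SIR-PH model, the quantity Z(t) = s(t)·exp(-R₀(s(t) + Y(t))) is constant along solutions, where Y(t) = (1/R₀)·i(t)·V⁻¹·b and R₀ = α V⁻¹ b > 0. -/

import Mathlib

open Matrix

/-! With `c = V⁻¹ b` one has `α ⬝ c = R₀` and `(i V) ⬝ c = i ⬝ b`, so `R₀ Y = i ⬝ c` satisfies
`(i ⬝ c)' = R₀ s β - β` where `β = i ⬝ b`, while `s' = -s β`. Hence
`(s · exp (-(R₀ s + i ⬝ c)))' = exp (…) · (-s β + s (R₀ s β - R₀ s β + β)) = 0`. -/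

theorem hasDerivAt_dotProduct_const {ι : Type*} [Fintype ι] {f : ℝ → ι → ℝ} {f' c : ι → ℝ}
    {t : ℝ} (hf : ∀ k, HasDerivAt (fun u => f u k) (f' k) t) :
    HasDerivAt (fun u => f u ⬝ᵥ c) (f' ⬝ᵥ c) t :=
  HasDerivAt.fun_sum fun k _ => (hf k).mul_const (c k)

theorem vecMul_dotProduct_inv_mulVec {ι R : Type*} [Fintype ι] [DecidableEq ι] [CommRing R]
    {V : Matrix ι ι R} (hV : IsUnit V.det) (x b : ι → R) :
    x ᵥ* V ⬝ᵥ (V⁻¹ *ᵥ b) = x ⬝ᵥ b := by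
  rw [← dotProduct_mulVec, mulVec_mulVec, mul_nonsing_inv V hV, one_mulVec]

theorem hasDerivAt_mul_exp_neg_eq_zero (R : ℝ) {s y : ℝ → ℝ} {β t : ℝ}
    (hs : HasDerivAt s (-(s t * β)) t) (hy : HasDerivAt y (R * s t * β - β) t) :
    HasDerivAt (fun u => s u * Real.exp (-(R * s u + y u))) 0 t := by
  have hE : HasDerivAt (fun u => -(R * s u + y u)) (-(R * -(s t * β) + (R * s t * β - β))) t :=
    ((hs.const_mul R).add hy).neg
  exact (hs.fun_mul hE.exp).congr_deriv (by ring)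

theorem sirph_Z_invariant_general
    (n : ℕ) (s : ℝ → ℝ) (i : ℝ → Fin n → ℝ)
    (α b : Fin n → ℝ) (V : Matrix (Fin n) (Fin n) ℝ)
    (hV : IsUnit V.det)
    (R₀ : ℝ) (hR₀ : R₀ = (Matrix.vecMul α V⁻¹) ⬝ᵥ b) (hR₀pos : 0 < R₀)
    (hs : ∀ t, HasDerivAt s (-(s t * (i t ⬝ᵥ b))) t)
    (hi : ∀ t k, HasDerivAt (fun u => i u k)
        (s t * (i t ⬝ᵥ b) * α k - Matrix.vecMul (i t) V k) t) :
    ∀ t, s t * Real.exp (-R₀ * (s t + (1 / R₀) * ((Matrix.vecMul (i t) V⁻¹) ⬝ᵥ b)))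
        = s 0 * Real.exp (-R₀ * (s 0 + (1 / R₀) * ((Matrix.vecMul (i 0) V⁻¹) ⬝ᵥ b))) := by
  have hY : ∀ t, HasDerivAt (fun u => i u ⬝ᵥ (V⁻¹ *ᵥ b)) (R₀ * s t * (i t ⬝ᵥ b) - i t ⬝ᵥ b) t := by
    intro t
    convert hasDerivAt_dotProduct_const (c := V⁻¹ *ᵥ b) (hi t) using 1
    change _ = ((s t * (i t ⬝ᵥ b)) • α - i t ᵥ* V) ⬝ᵥ (V⁻¹ *ᵥ b)
    rw [sub_dotProduct, smul_dotProduct, vecMul_dotProduct_inv_mulVec hV, dotProduct_mulVec,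
      ← hR₀, smul_eq_mul]
    ring
  have hZ : ∀ u, HasDerivAt (fun u => s u * Real.exp (-(R₀ * s u + i u ⬝ᵥ (V⁻¹ *ᵥ b)))) 0 u :=
    fun u => hasDerivAt_mul_exp_neg_eq_zero R₀ (hs u) (hY u)
  have hZ_eq : ∀ u, s u * Real.exp (-R₀ * (s u + (1 / R₀) * (i u ᵥ* V⁻¹ ⬝ᵥ b)))
      = s u * Real.exp (-(R₀ * s u + i u ⬝ᵥ (V⁻¹ *ᵥ b))) := by
    intro u
    rw [dotProduct_mulVec]
    field_simp
  intro t
  rw [hZ_eq, hZ_eq]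
  exact is_const_of_deriv_eq_zero (fun u => (hZ u).differentiableAt) (fun u => (hZ u).deriv) t 0

/-- SIR-PH: Z(t) = s(t)·exp(-R₀(s(t)+Y(t))) is constant along solutions. -/
theorem sirph_Z_invariant
    (n : ℕ) (s : ℝ → ℝ) (i : ℝ → Fin n → ℝ)
    (α b : Fin n → ℝ) (V : Matrix (Fin n) (Fin n) ℝ)
    (hα : ∀ k, 0 ≤ α k) (hα1 : ∑ k, α k = 1)
    (hV : IsUnit V.det)
    (R₀ : ℝ) (hR₀ : R₀ = (Matrix.vecMul α V⁻¹) ⬝ᵥ b) (hR₀pos : 0 < R₀)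
    (hspos : ∀ t, 0 < s t)
    (hs : ∀ t, HasDerivAt s (-(s t * (i t ⬝ᵥ b))) t)
    (hi : ∀ t k, HasDerivAt (fun u => i u k)
        (s t * (i t ⬝ᵥ b) * α k - Matrix.vecMul (i t) V k) t) :
    ∀ t, s t * Real.exp (-R₀ * (s t + (1 / R₀) * ((Matrix.vecMul (i t) V⁻¹) ⬝ᵥ b)))
        = s 0 * Real.exp (-R₀ * (s 0 + (1 / R₀) * ((Matrix.vecMul (i 0) V⁻¹) ⬝ᵥ b))) :=
  sirph_Z_invariant_general n s i α b V hV R₀ hR₀ hR₀pos hs hi
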